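/- arXiv:2102.11030 — 4 statements merged into one kernel-verified Lean document; each statement's English description precedes it below -/
import Mathlib

section
/- For every integer m ≥ 1 and every complex-valued v ∈ H^2(0, π) with v(0) = v(π) = 0, the inequality ∫₀^π ( (2/m²)|v''|² + 4|v'|² + 2m²|v|² ) dy ≥ 2 ∫₀^π ( (2/m²)|v'|² + 2|v|² ) dy holds. -/
/-!
The first-order Wirtinger inequality `∫ ‖v‖² ≤ ∫ ‖v'‖²` on `[0, π]` comes from the identity
`(cot y ‖v y‖²)' = ‖v'‖² - ‖v‖² - ‖v' - cot y • v‖²`, integrated over `[0, π]`: the boundary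
terms vanish because `v y = O(sin y)` at the endpoints. Integrating by parts,
`∫ ‖v''‖² - 2 ∫ ‖v'‖² + ∫ ‖v‖² = ∫ ‖v'' + v‖² ≥ 0`. Writing `A, B, C` for the integrals of
`‖v''‖², ‖v'‖², ‖v‖²`, the difference of the two sides of the estimate is
`(2/m²) (A - 2B + C) + 4 (B - C) + 2 (m² - 1/m²) C ≥ 0`.
-/

open Real Set MeasureTheory intervalIntegral
open scoped RealInnerProductSpace

theorem Real.hasDerivAt_cot {y : ℝ} (hy : sin y ≠ 0) : HasDerivAt cot (-(1 + cot y ^ 2)) y := by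
  have h := (hasDerivAt_cos y).div (hasDerivAt_sin y) hy
  rw [show cot = fun t => cos t / sin t from funext cot_eq_cos_div_sin]
  refine h.congr_deriv ?_
  field_simp
  ring

variable {E : Type*} [NormedAddCommGroup E] [InnerProductSpace ℝ E]

theorem hasDerivAt_cot_mul_norm_sq {v : ℝ → E} {v' : E} {y : ℝ} (hy : sin y ≠ 0)
    (hv : HasDerivAt v v' y) :
    HasDerivAt (fun t => cot t * ‖v t‖ ^ 2) (‖v'‖ ^ 2 - ‖v y‖ ^ 2 - ‖v' - cot y • v y‖ ^ 2) y := by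
  refine ((hasDerivAt_cot hy).mul hv.norm_sq).congr_deriv ?_
  rw [norm_sub_sq_real, inner_smul_right, norm_smul, real_inner_comm, Real.norm_eq_abs, mul_pow,
    sq_abs]
  ring

theorem continuousAt_cot_mul_norm_sq {v : ℝ → E} {v' : E} {a : ℝ} (ha : sin a = 0)
    (hv : HasDerivAt v v' a) (hva : v a = 0) : ContinuousAt (fun y => cot y * ‖v y‖ ^ 2) a := by
  have hcos : cos a ≠ 0 := by
    intro h
    simpa [h, ha] using cos_sq_add_sin_sq a
  -- away from `a`, `cot y * ‖v y‖ ^ 2 = cos y * (slope sin a y)⁻¹ * (y - a) * ‖slope v a y‖ ^ 2`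
  have hlim := (((continuous_cos.tendsto a).mono_left nhdsWithin_le_nhds).mul
    ((hasDerivAt_iff_tendsto_slope.mp (hasDerivAt_sin a)).inv₀ hcos)).mul
    (((Filter.tendsto_id.sub_const a).mono_left nhdsWithin_le_nhds).mul
      ((hasDerivAt_iff_tendsto_slope.mp hv).norm.pow 2))
  rw [continuousAt_iff_punctured_nhds]
  simp only [hva, norm_zero, sub_self, zero_mul, mul_zero, ne_eq, OfNat.ofNat_ne_zero,
    not_false_eq_true, zero_pow] at hlim ⊢
  refine hlim.congr' ?_
  filter_upwards [self_mem_nhdsWithin] with y (hy : y ≠ a)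
  have hya : y - a ≠ 0 := sub_ne_zero.mpr hy
  rw [slope_def_field, slope_def_module, ha, hva, sub_zero, sub_zero, norm_smul, cot_eq_cos_div_sin,
    Real.norm_eq_abs, mul_pow, sq_abs, id]
  field_simp

theorem integral_norm_sq_le_integral_norm_deriv_sq {v v' : ℝ → E}
    (hv : ∀ y ∈ Icc 0 π, HasDerivAt v (v' y) y)
    (hv' : IntervalIntegrable (fun y => ‖v' y‖ ^ 2) volume 0 π) (h0 : v 0 = 0) (hπ : v π = 0) :
    ∫ y in 0..π, ‖v y‖ ^ 2 ≤ ∫ y in 0..π, ‖v' y‖ ^ 2 := by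
  have hvc : IntervalIntegrable (fun y => ‖v y‖ ^ 2) volume 0 π :=
    ContinuousOn.intervalIntegrable_of_Icc pi_pos.le fun y hy =>
      ((hv y hy).continuousAt.norm.pow 2).continuousWithinAt
  have hψ : ContinuousOn (fun y => cot y * ‖v y‖ ^ 2) (Icc 0 π) := by
    intro y hy
    rcases eq_endpoints_or_mem_Ioo_of_mem_Icc hy with rfl | rfl | hy'
    · exact (continuousAt_cot_mul_norm_sq sin_zero (hv 0 hy) h0).continuousWithinAt
    · exact (continuousAt_cot_mul_norm_sq sin_pi (hv π hy) hπ).continuousWithinAt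
    · exact (hasDerivAt_cot_mul_norm_sq (sin_pos_of_pos_of_lt_pi hy'.1 hy'.2).ne'
        (hv y hy)).continuousAt.continuousWithinAt
  have key := sub_le_integral_of_hasDeriv_right_of_le pi_pos.le hψ
    (fun y hy => (hasDerivAt_cot_mul_norm_sq (sin_pos_of_pos_of_lt_pi hy.1 hy.2).ne'
      (hv y (Ioo_subset_Icc_self hy))).hasDerivWithinAt)
    ((intervalIntegrable_iff_integrableOn_Icc_of_le pi_pos.le).mp (hv'.sub hvc))
    (fun y _ => sub_le_self _ (sq_nonneg _))
  rw [integral_sub hv' hvc] at key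
  simpa [h0, hπ] using key

theorem two_mul_integral_norm_deriv_sq_le {v v' v'' : ℝ → E} {a b : ℝ} (hab : a ≤ b)
    (hv : ∀ y ∈ Icc a b, HasDerivAt v (v' y) y) (hv' : ∀ y ∈ Icc a b, HasDerivAt v' (v'' y) y)
    (hv'' : ContinuousOn v'' (Icc a b)) (ha : v a = 0) (hb : v b = 0) :
    2 * ∫ y in a..b, ‖v' y‖ ^ 2 ≤ (∫ y in a..b, ‖v'' y‖ ^ 2) + ∫ y in a..b, ‖v y‖ ^ 2 := by
  have hvc : ContinuousOn v (Icc a b) := fun y hy => (hv y hy).continuousAt.continuousWithinAt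
  have hv'c : ContinuousOn v' (Icc a b) := fun y hy => (hv' y hy).continuousAt.continuousWithinAt
  have i1 : IntervalIntegrable (fun y => ‖v' y‖ ^ 2) volume a b :=
    (hv'c.norm.pow 2).intervalIntegrable_of_Icc hab
  have i2 : IntervalIntegrable (fun y => ⟪v'' y, v y⟫) volume a b :=
    (hv''.inner hvc).intervalIntegrable_of_Icc hab
  have iA : IntervalIntegrable (fun y => ‖v'' y‖ ^ 2) volume a b :=
    (hv''.norm.pow 2).intervalIntegrable_of_Icc hab
  have iC : IntervalIntegrable (fun y => ‖v y‖ ^ 2) volume a b :=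
    (hvc.norm.pow 2).intervalIntegrable_of_Icc hab
  have hibp : (∫ y in a..b, ‖v' y‖ ^ 2) + ∫ y in a..b, ⟪v'' y, v y⟫ = 0 := by
    rw [← integral_add i1 i2, integral_eq_sub_of_hasDerivAt (f := fun y => ⟪v' y, v y⟫)
      (fun y hy => ?_) (i1.add i2)]
    · simp [ha, hb]
    · rw [uIcc_of_le hab] at hy
      simpa only [real_inner_self_eq_norm_sq, add_comm] using (hv' y hy).inner ℝ (hv y hy)
  have hcs : -(2 * ∫ y in a..b, ⟪v'' y, v y⟫) ≤
      (∫ y in a..b, ‖v'' y‖ ^ 2) + ∫ y in a..b, ‖v y‖ ^ 2 := by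
    rw [← intervalIntegral.integral_const_mul, ← intervalIntegral.integral_neg,
      ← integral_add iA iC]
    refine integral_mono_on hab (i2.const_mul 2).neg (iA.add iC) fun y _ => ?_
    linarith [norm_add_sq_real (v'' y) (v y), sq_nonneg ‖v'' y + v y‖]
  linarith

theorem mode_estimate_general (m : ℕ) (v v' v'' : ℝ → ℂ)
    (hderiv : ∀ y, HasDerivAt v (v' y) y)
    (hderiv' : ∀ y, HasDerivAt v' (v'' y) y)
    (hv''cont : Continuous v'')
    (hbc0 : v 0 = 0) (hbcpi : v Real.pi = 0) :
    ∫ y in (0:ℝ)..Real.pi,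
        ((2 / (m : ℝ) ^ 2) * ‖v'' y‖ ^ 2 + 4 * ‖v' y‖ ^ 2 + 2 * (m : ℝ) ^ 2 * ‖v y‖ ^ 2)
      ≥ 2 * ∫ y in (0:ℝ)..Real.pi,
        ((2 / (m : ℝ) ^ 2) * ‖v' y‖ ^ 2 + 2 * ‖v y‖ ^ 2) := by
  have hv : Continuous v := continuous_iff_continuousAt.2 fun y => (hderiv y).continuousAt
  have hv' : Continuous v' := continuous_iff_continuousAt.2 fun y => (hderiv' y).continuousAt
  have iA : IntervalIntegrable (fun y => ‖v'' y‖ ^ 2) volume 0 π :=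
    (hv''cont.norm.pow 2).intervalIntegrable 0 π
  have iB : IntervalIntegrable (fun y => ‖v' y‖ ^ 2) volume 0 π :=
    (hv'.norm.pow 2).intervalIntegrable 0 π
  have iC : IntervalIntegrable (fun y => ‖v y‖ ^ 2) volume 0 π :=
    (hv.norm.pow 2).intervalIntegrable 0 π
  have hW := integral_norm_sq_le_integral_norm_deriv_sq (fun y _ => hderiv y) iB hbc0 hbcpi
  have hP := two_mul_integral_norm_deriv_sq_le pi_pos.le (fun y _ => hderiv y)
    (fun y _ => hderiv' y) hv''cont.continuousOn hbc0 hbcpi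
  have hm : ((m : ℝ) ^ 2)⁻¹ ≤ (m : ℝ) ^ 2 := by
    rcases m.eq_zero_or_pos with rfl | hm
    · simp
    · have : (1 : ℝ) ≤ (m : ℝ) ^ 2 := one_le_pow₀ (Nat.one_le_cast.mpr hm)
      exact (inv_le_one_of_one_le₀ this).trans this
  rw [integral_add ((iA.const_mul _).add (iB.const_mul _)) (iC.const_mul _),
    integral_add (iA.const_mul _) (iB.const_mul _), integral_add (iB.const_mul _) (iC.const_mul _)]
  simp only [intervalIntegral.integral_const_mul, div_eq_mul_inv]
  have hC : 0 ≤ ∫ y in (0:ℝ)..π, ‖v y‖ ^ 2 := integral_nonneg pi_pos.le fun y _ => sq_nonneg _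
  linarith [mul_nonneg (inv_nonneg.2 (sq_nonneg (m : ℝ))) (sub_nonneg.2 hP),
    mul_nonneg (sub_nonneg.2 hm) hC]

/-- Per-Fourier-mode estimate for the Charney–DeVore energy stability proof. -/
theorem mode_estimate (m : ℕ) (hm : 1 ≤ m) (v v' v'' : ℝ → ℂ)
    (hderiv : ∀ y, HasDerivAt v (v' y) y)
    (hderiv' : ∀ y, HasDerivAt v' (v'' y) y)
    (hv''cont : Continuous v'')
    (hbc0 : v 0 = 0) (hbcpi : v Real.pi = 0) :
    ∫ y in (0:ℝ)..Real.pi,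
        ((2 / (m : ℝ) ^ 2) * ‖v'' y‖ ^ 2 + 4 * ‖v' y‖ ^ 2 + 2 * (m : ℝ) ^ 2 * ‖v y‖ ^ 2)
      ≥ 2 * ∫ y in (0:ℝ)..Real.pi,
        ((2 / (m : ℝ) ^ 2) * ‖v' y‖ ^ 2 + 2 * ‖v y‖ ^ 2) :=
  mode_estimate_general m v v' v'' hderiv hderiv' hv''cont hbc0 hbcpi
end

section
/- The constant 2 in the vorticity–energy inequality is optimal: for u(x,y) = sin x cos y and v(x,y) = −cos x sin y, one has ∫₀^π ∫₀^{2π} ζ'² dx dy = 2 ∫₀^π ∫₀^{2π} (u² + v²) dx dy, where ζ' = ∂v/∂x − ∂u/∂y. -/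
open Real intervalIntegral

lemma deriv1 (y x : ℝ) : deriv (fun x' => -Real.cos x' * Real.sin y) x = Real.sin x * Real.sin y := by
  have : (fun x' => -Real.cos x' * Real.sin y) = fun x' => (-Real.cos x') * Real.sin y := rfl
  rw [this, deriv_mul_const (by fun_prop)]
  simp

lemma deriv2 (y x : ℝ) : deriv (fun y' => Real.sin x * Real.cos y') y = Real.sin x * (-Real.sin y) := by
  rw [deriv_const_mul _ (by fun_prop)]
  simp

/-- Optimality of the constant 2 in the vorticity–energy inequality:
equality for u = sin x cos y, v = -cos x sin y. -/
theorem vorticity_energy_optimal :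
    (∫ y in (0:ℝ)..Real.pi, ∫ x in (0:ℝ)..(2 * Real.pi),
        (deriv (fun x' => -Real.cos x' * Real.sin y) x
          - deriv (fun y' => Real.sin x * Real.cos y') y) ^ 2)
      = 2 * ∫ y in (0:ℝ)..Real.pi, ∫ x in (0:ℝ)..(2 * Real.pi),
          ((Real.sin x * Real.cos y) ^ 2 + (-Real.cos x * Real.sin y) ^ 2) := by
  have L : (∫ y in (0:ℝ)..Real.pi, ∫ x in (0:ℝ)..(2 * Real.pi),
        (deriv (fun x' => -Real.cos x' * Real.sin y) x
          - deriv (fun y' => Real.sin x * Real.cos y') y) ^ 2) = 2 * Real.pi ^ 2 := by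
    have h : ∀ y : ℝ, (∫ x in (0:ℝ)..(2 * Real.pi),
        (deriv (fun x' => -Real.cos x' * Real.sin y) x
          - deriv (fun y' => Real.sin x * Real.cos y') y) ^ 2)
        = (4 * Real.pi) * Real.sin y ^ 2 := by
      intro y
      have : ∀ x : ℝ, (deriv (fun x' => -Real.cos x' * Real.sin y) x
          - deriv (fun y' => Real.sin x * Real.cos y') y) ^ 2
          = (4 * Real.sin y ^ 2) * Real.sin x ^ 2 := by
        intro x; rw [deriv1, deriv2]; ring
      simp_rw [this]
      rw [intervalIntegral.integral_const_mul, integral_sin_sq]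
      simp [Real.sin_two_pi]
      ring
    simp_rw [h]
    rw [intervalIntegral.integral_const_mul, integral_sin_sq]
    simp
    ring
  have R : (∫ y in (0:ℝ)..Real.pi, ∫ x in (0:ℝ)..(2 * Real.pi),
          ((Real.sin x * Real.cos y) ^ 2 + (-Real.cos x * Real.sin y) ^ 2)) = Real.pi ^ 2 := by
    have h : ∀ y : ℝ, (∫ x in (0:ℝ)..(2 * Real.pi),
        ((Real.sin x * Real.cos y) ^ 2 + (-Real.cos x * Real.sin y) ^ 2)) = Real.pi := by
      intro y
      have : ∀ x : ℝ, (Real.sin x * Real.cos y) ^ 2 + (-Real.cos x * Real.sin y) ^ 2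
          = Real.cos y ^ 2 * Real.sin x ^ 2 + Real.sin y ^ 2 * Real.cos x ^ 2 := by
        intro x; ring
      simp_rw [this]
      rw [intervalIntegral.integral_add (Continuous.intervalIntegrable (by fun_prop) _ _) (Continuous.intervalIntegrable (by fun_prop) _ _),
        intervalIntegral.integral_const_mul, intervalIntegral.integral_const_mul,
        integral_sin_sq, integral_cos_sq]
      simp only [Real.sin_two_pi, Real.cos_two_pi, Real.sin_zero, Real.cos_zero]
      linear_combination Real.pi * Real.sin_sq_add_cos_sq y
    simp_rw [h]
    simp [sq]
  rw [L, R]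
end

section
/- Let û₀ ∈ H^1(0, π) be real. Then ∫₀^π (û₀')² dy ≥ 2 ∫₀^π û₀² dy − (1/π³)(2π ∫₀^π û₀ dy)² − ((π²−3)/(12π³))(2π(û₀(0) − û₀(π)))². -/
/-!
Subtracting from `f` its mean and the ramp `(f 0 - f π) (y / π - 1 / 2)` gives a function `g` with
zero mean and `g 0 = g π`. On an interval of length `π` the nonzero Fourier frequencies are at least
`2` in absolute value, so Parseval gives Wirtinger's inequality `4 ∫ g² ≤ ∫ g'²`. Here
`g' = f' + (f 0 - f π) / π`, whence `∫ g'² = ∫ f'² - (f 0 - f π)² / π`, while Young's inequality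
`4 (u + v)² ≥ 2 u² - 4 v²`, for `u` the mean-free part of `f` and `v` the ramp, bounds `4 ∫ g²`
from below by `2 (∫ f² - (∫ f)² / π) - π (f 0 - f π)² / 3`.
-/

open MeasureTheory Real Set Complex
open scoped Interval

theorem ContinuousOn.memLp_two_restrict_Ioc {E : Type*} [NormedAddCommGroup E] {f : ℝ → E}
    {a b : ℝ} (hf : ContinuousOn f (Icc a b)) : MemLp f 2 (volume.restrict (Ioc a b)) :=
  ((memLp_two_iff_integrable_sq_norm (hf.aestronglyMeasurable measurableSet_Icc)).2
    (hf.norm.pow 2).integrableOn_Icc).mono_measure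
      (Measure.restrict_mono Ioc_subset_Icc_self le_rfl)

theorem fourierCoeffOn_deriv_of_eq_endpoints {a b : ℝ} (hab : a < b) {f f' : ℝ → ℂ} {n : ℤ}
    (hn : n ≠ 0) (hf : ∀ x ∈ [[a, b]], HasDerivAt f (f' x) x)
    (hf' : IntervalIntegrable f' volume a b) (hper : f a = f b) :
    fourierCoeffOn hab f' n = 2 * π * I * n / (b - a) * fourierCoeffOn hab f n := by
  rw [fourierCoeffOn_of_hasDerivAt hab hn hf hf', hper, sub_self, mul_zero, zero_sub]
  have : (b - a : ℂ) ≠ 0 := by exact_mod_cast (sub_pos.2 hab).ne'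
  have : (n : ℂ) ≠ 0 := by exact_mod_cast hn
  field_simp

theorem wirtinger_inequality {a b : ℝ} (hab : a < b) {f f' : ℝ → ℂ}
    (hf : ∀ x ∈ [[a, b]], HasDerivAt f (f' x) x) (hf' : MemLp f' 2 (volume.restrict (Ioc a b)))
    (hper : f a = f b) (hmean : ∫ x in a..b, f x = 0) :
    (2 * π / (b - a)) ^ 2 * ∫ x in a..b, ‖f x‖ ^ 2 ≤ ∫ x in a..b, ‖f' x‖ ^ 2 := by
  have hL : 0 < b - a := sub_pos.2 hab
  have hfc : ContinuousOn f (Icc a b) := fun x hx =>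
    (hf x (by rwa [uIcc_of_le hab.le])).continuousAt.continuousWithinAt
  have hf'i : IntervalIntegrable f' volume a b :=
    (intervalIntegrable_iff_integrableOn_Ioc_of_le hab.le).2 (hf'.integrable one_le_two)
  have hcoeff : ∀ n : ℤ, (2 * π / (b - a)) ^ 2 * ‖fourierCoeffOn hab f n‖ ^ 2
      ≤ ‖fourierCoeffOn hab f' n‖ ^ 2 := by
    intro n
    rcases eq_or_ne n 0 with rfl | hn
    · rw [fourierCoeffOn_eq_integral]
      simp [hmean]
    · have hn1 : (1 : ℝ) ≤ |(n : ℝ)| := by exact_mod_cast Int.one_le_abs hn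
      have hnorm : ‖2 * π * I * n / (b - a)‖ = 2 * π / (b - a) * |(n : ℝ)| := by
        rw [← ofReal_sub, norm_div, norm_real, Real.norm_of_nonneg hL.le]
        simp [abs_of_pos pi_pos]
        ring
      rw [fourierCoeffOn_deriv_of_eq_endpoints hab hn hf hf'i hper, norm_mul, mul_pow, hnorm]
      gcongr ?_ ^ 2 * _
      exact le_mul_of_one_le_right (by positivity) hn1
  have hsum := hasSum_le hcoeff
    ((hasSum_sq_fourierCoeffOn hab hfc.memLp_two_restrict_Ioc).mul_left _)
    (hasSum_sq_fourierCoeffOn hab hf')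
  rw [smul_eq_mul, smul_eq_mul, ← mul_assoc, mul_comm _ (b - a)⁻¹, mul_assoc] at hsum
  exact le_of_mul_le_mul_left hsum (inv_pos.2 hL)

theorem wirtinger_inequality_real {a b : ℝ} (hab : a < b) {g g' : ℝ → ℝ}
    (hg : ∀ x ∈ [[a, b]], HasDerivAt g (g' x) x) (hg' : MemLp g' 2 (volume.restrict (Ioc a b)))
    (hper : g a = g b) (hmean : ∫ x in a..b, g x = 0) :
    (2 * π / (b - a)) ^ 2 * ∫ x in a..b, g x ^ 2 ≤ ∫ x in a..b, g' x ^ 2 := by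
  have h := wirtinger_inequality hab (f := fun x => (g x : ℂ)) (f' := fun x => (g' x : ℂ))
    (fun x hx => (hg x hx).ofReal_comp) hg'.ofReal (by rw [hper])
    (by rw [intervalIntegral.integral_ofReal, hmean, ofReal_zero])
  simpa only [norm_real, Real.norm_eq_abs, sq_abs] using h

theorem integral_add_const_sq {a b : ℝ} (c : ℝ) {f : ℝ → ℝ} (hf : IntervalIntegrable f volume a b)
    (hf2 : IntervalIntegrable (fun x => f x ^ 2) volume a b) :
    ∫ x in a..b, (f x + c) ^ 2
      = (∫ x in a..b, f x ^ 2) + 2 * c * (∫ x in a..b, f x) + (b - a) * c ^ 2 := by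
  have h : ∀ x, (f x + c) ^ 2 = f x ^ 2 + (2 * c * f x + c ^ 2) := fun x => by ring
  simp_rw [h]
  rw [intervalIntegral.integral_add hf2 ((hf.const_mul _).add intervalIntegrable_const),
    intervalIntegral.integral_add (hf.const_mul _) intervalIntegrable_const,
    intervalIntegral.integral_const_mul, intervalIntegral.integral_const, smul_eq_mul, add_assoc]

theorem integral_div_sub_half (T : ℝ) : ∫ x in (0 : ℝ)..T, (x / T - 1 / 2) = 0 := by
  rcases eq_or_ne T 0 with rfl | hT
  · simp
  · simp [intervalIntegral.integral_comp_div_sub (fun x => x), hT]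
    norm_num

theorem integral_div_sub_half_sq (T : ℝ) : ∫ x in (0 : ℝ)..T, (x / T - 1 / 2) ^ 2 = T / 12 := by
  rcases eq_or_ne T 0 with rfl | hT
  · simp
  · simp [intervalIntegral.integral_comp_div_sub (fun x => x ^ 2), hT]
    ring

noncomputable def periodicPart (f : ℝ → ℝ) (T y : ℝ) : ℝ :=
  f y - (∫ x in (0 : ℝ)..T, f x) / T + (f 0 - f T) * (y / T - 1 / 2)

section periodicPart

variable {f f' : ℝ → ℝ} {T : ℝ}

theorem hasDerivAt_periodicPart {y d : ℝ} (hf : HasDerivAt f d y) :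
    HasDerivAt (periodicPart f T) (d + (f 0 - f T) / T) y :=
  ((hf.sub_const _).add ((((hasDerivAt_id y).div_const T).sub_const (1 / 2)).const_mul _))
    |>.congr_deriv (by ring)

theorem periodicPart_zero_eq (hT : T ≠ 0) : periodicPart f T 0 = periodicPart f T T := by
  simp only [periodicPart]
  field_simp
  ring

theorem integral_periodicPart (hT : T ≠ 0) (hf : IntervalIntegrable f volume 0 T) :
    ∫ y in (0 : ℝ)..T, periodicPart f T y = 0 := by
  simp only [periodicPart]
  rw [intervalIntegral.integral_add (hf.sub intervalIntegrable_const)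
      (Continuous.intervalIntegrable (by fun_prop) _ _),
    intervalIntegral.integral_sub hf intervalIntegrable_const, intervalIntegral.integral_const,
    intervalIntegral.integral_const_mul, integral_div_sub_half, sub_zero, smul_eq_mul,
    mul_div_cancel₀ _ hT]
  ring

theorem integral_deriv_periodicPart_sq (hT : T ≠ 0) (hf : ∀ y ∈ [[0, T]], HasDerivAt f (f' y) y)
    (hf' : IntervalIntegrable f' volume 0 T)
    (hf'2 : IntervalIntegrable (fun y => f' y ^ 2) volume 0 T) :
    ∫ y in (0 : ℝ)..T, (f' y + (f 0 - f T) / T) ^ 2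
      = (∫ y in (0 : ℝ)..T, f' y ^ 2) - (f 0 - f T) ^ 2 / T := by
  rw [integral_add_const_sq _ hf' hf'2, intervalIntegral.integral_eq_sub_of_hasDerivAt hf hf']
  field_simp
  ring

theorem le_four_mul_integral_periodicPart_sq (hT : 0 < T) (hf : Continuous f) :
    2 * ((∫ y in (0 : ℝ)..T, f y ^ 2) - (∫ y in (0 : ℝ)..T, f y) ^ 2 / T)
        - T / 3 * (f 0 - f T) ^ 2
      ≤ 4 * ∫ y in (0 : ℝ)..T, periodicPart f T y ^ 2 := by
  set M := (∫ y in (0 : ℝ)..T, f y) / T with hM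
  set Δ := f 0 - f T
  calc _ = ∫ y in (0 : ℝ)..T, (2 * (f y + -M) ^ 2 - 4 * Δ ^ 2 * (y / T - 1 / 2) ^ 2) := by
        rw [intervalIntegral.integral_sub (Continuous.intervalIntegrable (by fun_prop) _ _)
            (Continuous.intervalIntegrable (by fun_prop) _ _),
          intervalIntegral.integral_const_mul, intervalIntegral.integral_const_mul,
          integral_add_const_sq _ (hf.intervalIntegrable _ _) ((hf.pow 2).intervalIntegrable _ _),
          integral_div_sub_half_sq, hM]
        field_simp
        ring
    _ ≤ ∫ y in (0 : ℝ)..T, 4 * periodicPart f T y ^ 2 := by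
        refine intervalIntegral.integral_mono_on hT.le
          (Continuous.intervalIntegrable (by fun_prop) _ _)
          (Continuous.intervalIntegrable (by unfold periodicPart; fun_prop) _ _) fun y _ => ?_
        have h : periodicPart f T y = f y + -M + Δ * (y / T - 1 / 2) := by
          simp only [periodicPart, M, Δ]
          ring
        rw [h]
        nlinarith [sq_nonneg (f y + -M + 2 * Δ * (y / T - 1 / 2))]
    _ = 4 * ∫ y in (0 : ℝ)..T, periodicPart f T y ^ 2 := intervalIntegral.integral_const_mul _ _

end periodicPart

/-- Lower bound for the enstrophy of the zeroth zonal Fourier mode. -/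
theorem zeroth_mode_inequality (f f' : ℝ → ℝ)
    (hderiv : ∀ y, HasDerivAt f (f' y) y)
    (hf'cont : Continuous f') :
    ∫ y in (0:ℝ)..Real.pi, (f' y) ^ 2
      ≥ 2 * (∫ y in (0:ℝ)..Real.pi, (f y) ^ 2)
        - (1 / Real.pi ^ 3) * (2 * Real.pi * ∫ y in (0:ℝ)..Real.pi, f y) ^ 2
        - ((Real.pi ^ 2 - 3) / (12 * Real.pi ^ 3)) *
            (2 * Real.pi * (f 0 - f Real.pi)) ^ 2 := by
  have hfc : Continuous f := continuous_iff_continuousAt.2 fun y => (hderiv y).continuousAt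
  have hwirt := wirtinger_inequality_real pi_pos (fun y _ => hasDerivAt_periodicPart (hderiv y))
    (hf'cont.add continuous_const).continuousOn.memLp_two_restrict_Ioc
    (periodicPart_zero_eq pi_ne_zero)
    (integral_periodicPart pi_ne_zero (hfc.intervalIntegrable _ _))
  rw [integral_deriv_periodicPart_sq pi_ne_zero (fun y _ => hderiv y)
    (hf'cont.intervalIntegrable _ _) ((hf'cont.pow 2).intervalIntegrable _ _), sub_zero,
    mul_div_cancel_right₀ _ pi_ne_zero] at hwirt
  have hyoung := le_four_mul_integral_periodicPart_sq pi_pos hfc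
  have hmean : 1 / π ^ 3 * (2 * π * ∫ y in (0 : ℝ)..π, f y) ^ 2
      = 4 * ((∫ y in (0 : ℝ)..π, f y) ^ 2 / π) := by
    field_simp
    ring
  have hjump : (π ^ 2 - 3) / (12 * π ^ 3) * (2 * π * (f 0 - f π)) ^ 2
      = π / 3 * (f 0 - f π) ^ 2 - (f 0 - f π) ^ 2 / π := by
    field_simp
    ring
  have hmean_nonneg : 0 ≤ (∫ y in (0 : ℝ)..π, f y) ^ 2 / π := by positivity
  rw [hmean, hjump]
  linarith
end

section
/- Suppose smooth functions u(x,y,t), v(x,y,t), ζ'(x,y,t) on (0,2π)×(0,π), 2π-periodic in x with v = 0 at y = 0, π, satisfy d/dt ∫∫ (u²+v²)/2 = −∫∫ u v U₀' − k ∫∫ (u²+v²) and d/dt ∫∫ ζ'²/2 = −∫∫ u v (h'' − U₀''') − k ∫∫ ζ'², where U₀(y) = C sin y + C' and h(y) = Cη cos y. Then the quantity E(t) = ∫∫ (ζ'² + (η−1)(u²+v²)) dx dy satisfies dE/dt = −2kE, so E(t) = E(0) e^{−2kt}. -/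
/-!
The energy identity and the enstrophy identity share the same exchange integral
`∫∫ u v cos y`: it enters the enstrophy balance with the factor `h'' - U₀''' = (1 - η) U₀'`.
In the combination `enstrophy + (η - 1) · energy` the exchange terms therefore cancel, leaving
only the linear damping, so the generalized energy solves `E' = -2k E`.
-/

open Real

theorem eq_mul_exp_of_hasDerivAt {f : ℝ → ℝ} {a : ℝ} (hf : ∀ t, HasDerivAt f (a * f t) t)
    (t : ℝ) : f t = f 0 * exp (a * t) := by
  have hderiv : ∀ s, HasDerivAt (fun s => f s * exp (-(a * s))) 0 s := fun s => by
    have hexp : HasDerivAt (fun s => exp (-(a * s))) (-a * exp (-(a * s))) s := by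
      simpa [mul_comm] using ((hasDerivAt_id s).const_mul a).neg.exp
    exact ((hf s).mul hexp).congr_deriv (by ring)
  have hconst : f t * exp (-(a * t)) = f 0 := by
    simpa using is_const_of_deriv_eq_zero (fun s => (hderiv s).differentiableAt)
      (fun s => (hderiv s).deriv) t 0
  rw [← hconst, mul_assoc, ← exp_add, neg_add_cancel, exp_zero, mul_one]

theorem hasDerivAt_enstrophy_add_energy {Z W X : ℝ → ℝ} {η k t : ℝ}
    (hZ : HasDerivAt (fun t => Z t / 2) (-((1 - η) * X t) - k * Z t) t)
    (hW : HasDerivAt (fun t => W t / 2) (-X t - k * W t) t) :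
    HasDerivAt (fun t => Z t + (η - 1) * W t) (-(2 * k) * (Z t + (η - 1) * W t)) t := by
  have hfun : (fun t => Z t + (η - 1) * W t)
      = fun t => 2 * (Z t / 2) + 2 * (η - 1) * (W t / 2) := by
    ext; ring
  rw [hfun]
  exact ((hZ.const_mul 2).add (hW.const_mul (2 * (η - 1)))).congr_deriv (by ring)

theorem intervalIntegral_intervalIntegral_add_const_mul {f g : ℝ → ℝ → ℝ}
    (hf : Continuous (fun p : ℝ × ℝ => f p.1 p.2)) (hg : Continuous (fun p : ℝ × ℝ => g p.1 p.2))
    (a b c d r : ℝ) :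
    (∫ y in c..d, ∫ x in a..b, (f x y + r * g x y))
      = (∫ y in c..d, ∫ x in a..b, f x y) + r * ∫ y in c..d, ∫ x in a..b, g x y := by
  have hinner : ∀ y, (∫ x in a..b, (f x y + r * g x y))
      = (∫ x in a..b, f x y) + r * ∫ x in a..b, g x y := fun y => by
    have hfy : Continuous fun x => f x y := hf.comp (continuous_id.prodMk continuous_const)
    have hgy : Continuous fun x => g x y := hg.comp (continuous_id.prodMk continuous_const)
    rw [intervalIntegral.integral_add (hfy.intervalIntegrable _ _)
      ((hgy.const_mul r).intervalIntegrable _ _), intervalIntegral.integral_const_mul]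
  have hF : Continuous fun y => ∫ x in a..b, f x y :=
    intervalIntegral.continuous_parametric_intervalIntegral_of_continuous'
      (f := fun y x => f x y) (hf.comp continuous_swap) a b
  have hG : Continuous fun y => ∫ x in a..b, g x y :=
    intervalIntegral.continuous_parametric_intervalIntegral_of_continuous'
      (f := fun y x => g x y) (hg.comp continuous_swap) a b
  simp only [hinner]
  rw [intervalIntegral.integral_add (hF.intervalIntegrable _ _)
    ((hG.const_mul r).intervalIntegrable _ _), intervalIntegral.integral_const_mul]

theorem generalized_energy_decay_general
    (C η k : ℝ)
    (u v ζ : ℝ → ℝ → ℝ → ℝ)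
    (hcu : Continuous (fun q : ℝ × ℝ × ℝ => u q.1 q.2.1 q.2.2))
    (hcv : Continuous (fun q : ℝ × ℝ × ℝ => v q.1 q.2.1 q.2.2))
    (hcz : Continuous (fun q : ℝ × ℝ × ℝ => ζ q.1 q.2.1 q.2.2))
    -- energy identity: d/dt ∫∫ (u²+v²)/2 = −∫∫ u v U₀' − k ∫∫ (u²+v²), U₀' y = C cos y
    (hE : ∀ t, HasDerivAt
      (fun t' => ∫ y in (0:ℝ)..Real.pi, ∫ x in (0:ℝ)..(2 * Real.pi),
        ((u x y t') ^ 2 + (v x y t') ^ 2) / 2)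
      (-(∫ y in (0:ℝ)..Real.pi, ∫ x in (0:ℝ)..(2 * Real.pi),
          u x y t * v x y t * (C * Real.cos y))
        - k * ∫ y in (0:ℝ)..Real.pi, ∫ x in (0:ℝ)..(2 * Real.pi),
          ((u x y t) ^ 2 + (v x y t) ^ 2)) t)
    -- enstrophy identity: d/dt ∫∫ ζ'²/2 = −∫∫ u v (h'' − U₀''') − k ∫∫ ζ'²,
    -- with h'' y = −Cη cos y and U₀''' y = −C cos y
    (hZ : ∀ t, HasDerivAt
      (fun t' => ∫ y in (0:ℝ)..Real.pi, ∫ x in (0:ℝ)..(2 * Real.pi),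
        (ζ x y t') ^ 2 / 2)
      (-(∫ y in (0:ℝ)..Real.pi, ∫ x in (0:ℝ)..(2 * Real.pi),
          u x y t * v x y t * ((-(C * η * Real.cos y)) - (-(C * Real.cos y))))
        - k * ∫ y in (0:ℝ)..Real.pi, ∫ x in (0:ℝ)..(2 * Real.pi),
          (ζ x y t) ^ 2) t) :
    (∀ t, HasDerivAt
      (fun t' => ∫ y in (0:ℝ)..Real.pi, ∫ x in (0:ℝ)..(2 * Real.pi),
        ((ζ x y t') ^ 2 + (η - 1) * ((u x y t') ^ 2 + (v x y t') ^ 2)))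
      (-(2 * k) * ∫ y in (0:ℝ)..Real.pi, ∫ x in (0:ℝ)..(2 * Real.pi),
        ((ζ x y t) ^ 2 + (η - 1) * ((u x y t) ^ 2 + (v x y t) ^ 2))) t)
    ∧ (∀ t, (∫ y in (0:ℝ)..Real.pi, ∫ x in (0:ℝ)..(2 * Real.pi),
        ((ζ x y t) ^ 2 + (η - 1) * ((u x y t) ^ 2 + (v x y t) ^ 2)))
      = (∫ y in (0:ℝ)..Real.pi, ∫ x in (0:ℝ)..(2 * Real.pi),
        ((ζ x y 0) ^ 2 + (η - 1) * ((u x y 0) ^ 2 + (v x y 0) ^ 2)))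
          * Real.exp (-(2 * k) * t)) := by
  have hslice : ∀ w : ℝ → ℝ → ℝ → ℝ, Continuous (fun q : ℝ × ℝ × ℝ => w q.1 q.2.1 q.2.2) →
      ∀ t, Continuous fun p : ℝ × ℝ => w p.1 p.2 t := fun w hw t =>
    hw.comp (continuous_fst.prodMk (continuous_snd.prodMk continuous_const))
  have hsplit := fun t => intervalIntegral_intervalIntegral_add_const_mul
    (f := fun x y => ζ x y t ^ 2) (g := fun x y => u x y t ^ 2 + v x y t ^ 2)
    ((hslice ζ hcz t).pow 2) (((hslice u hcu t).pow 2).add ((hslice v hcv t).pow 2))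
    0 (2 * π) 0 π (η - 1)
  have hexchange : ∀ t, (∫ y in (0:ℝ)..π, ∫ x in (0:ℝ)..(2 * π),
      u x y t * v x y t * ((-(C * η * cos y)) - (-(C * cos y))))
      = (1 - η) * ∫ y in (0:ℝ)..π, ∫ x in (0:ℝ)..(2 * π), u x y t * v x y t * (C * cos y) := by
    intro t
    simp only [show ∀ x y, u x y t * v x y t * ((-(C * η * cos y)) - (-(C * cos y)))
      = (1 - η) * (u x y t * v x y t * (C * cos y)) from fun x y => by ring,
      intervalIntegral.integral_const_mul]
  have hderiv : ∀ t, HasDerivAt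
      (fun t' => ∫ y in (0:ℝ)..π, ∫ x in (0:ℝ)..(2 * π),
        ((ζ x y t') ^ 2 + (η - 1) * ((u x y t') ^ 2 + (v x y t') ^ 2)))
      (-(2 * k) * ∫ y in (0:ℝ)..π, ∫ x in (0:ℝ)..(2 * π),
        ((ζ x y t) ^ 2 + (η - 1) * ((u x y t) ^ 2 + (v x y t) ^ 2))) t := fun t => by
    simp only [hsplit]
    refine hasDerivAt_enstrophy_add_energy
      (X := fun t => ∫ y in (0:ℝ)..π, ∫ x in (0:ℝ)..(2 * π), u x y t * v x y t * (C * cos y)) ?_ ?_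
    · simpa only [intervalIntegral.integral_div, hexchange] using hZ t
    · simpa only [intervalIntegral.integral_div] using hE t
  exact ⟨hderiv, eq_mul_exp_of_hasDerivAt hderiv⟩

/-- The remarkable energy–enstrophy identity: the generalized energy
E = ∫∫ (ζ'² + (η−1)(u²+v²)) decays exactly like e^{−2kt}. -/
theorem generalized_energy_decay
    (C C' η k : ℝ) (hk : 0 < k)
    (u v ζ : ℝ → ℝ → ℝ → ℝ)
    (hcu : Continuous (fun q : ℝ × ℝ × ℝ => u q.1 q.2.1 q.2.2))
    (hcv : Continuous (fun q : ℝ × ℝ × ℝ => v q.1 q.2.1 q.2.2))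
    (hcz : Continuous (fun q : ℝ × ℝ × ℝ => ζ q.1 q.2.1 q.2.2))
    -- energy identity: d/dt ∫∫ (u²+v²)/2 = −∫∫ u v U₀' − k ∫∫ (u²+v²), U₀' y = C cos y
    (hE : ∀ t, HasDerivAt
      (fun t' => ∫ y in (0:ℝ)..Real.pi, ∫ x in (0:ℝ)..(2 * Real.pi),
        ((u x y t') ^ 2 + (v x y t') ^ 2) / 2)
      (-(∫ y in (0:ℝ)..Real.pi, ∫ x in (0:ℝ)..(2 * Real.pi),
          u x y t * v x y t * (C * Real.cos y))
        - k * ∫ y in (0:ℝ)..Real.pi, ∫ x in (0:ℝ)..(2 * Real.pi),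
          ((u x y t) ^ 2 + (v x y t) ^ 2)) t)
    -- enstrophy identity: d/dt ∫∫ ζ'²/2 = −∫∫ u v (h'' − U₀''') − k ∫∫ ζ'²,
    -- with h'' y = −Cη cos y and U₀''' y = −C cos y
    (hZ : ∀ t, HasDerivAt
      (fun t' => ∫ y in (0:ℝ)..Real.pi, ∫ x in (0:ℝ)..(2 * Real.pi),
        (ζ x y t') ^ 2 / 2)
      (-(∫ y in (0:ℝ)..Real.pi, ∫ x in (0:ℝ)..(2 * Real.pi),
          u x y t * v x y t * ((-(C * η * Real.cos y)) - (-(C * Real.cos y))))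
        - k * ∫ y in (0:ℝ)..Real.pi, ∫ x in (0:ℝ)..(2 * Real.pi),
          (ζ x y t) ^ 2) t) :
    (∀ t, HasDerivAt
      (fun t' => ∫ y in (0:ℝ)..Real.pi, ∫ x in (0:ℝ)..(2 * Real.pi),
        ((ζ x y t') ^ 2 + (η - 1) * ((u x y t') ^ 2 + (v x y t') ^ 2)))
      (-(2 * k) * ∫ y in (0:ℝ)..Real.pi, ∫ x in (0:ℝ)..(2 * Real.pi),
        ((ζ x y t) ^ 2 + (η - 1) * ((u x y t) ^ 2 + (v x y t) ^ 2))) t)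
    ∧ (∀ t, (∫ y in (0:ℝ)..Real.pi, ∫ x in (0:ℝ)..(2 * Real.pi),
        ((ζ x y t) ^ 2 + (η - 1) * ((u x y t) ^ 2 + (v x y t) ^ 2)))
      = (∫ y in (0:ℝ)..Real.pi, ∫ x in (0:ℝ)..(2 * Real.pi),
        ((ζ x y 0) ^ 2 + (η - 1) * ((u x y 0) ^ 2 + (v x y 0) ^ 2)))
          * Real.exp (-(2 * k) * t)) :=
  generalized_energy_decay_general C η k u v ζ hcu hcv hcz hE hZ
end
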